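/- Let k be a field and D a positive integer. Let p_1,p_2,p_3,q_1,q_2,q_3 and p′_1,p′_2,p′_3,q′_1,q′_2,q′_3 be two collections of integers, each congruent to D mod 2, with p_1+p_2+p_3 = q_1+q_2+q_3 = p′_1+p′_2+p′_3 = q′_1+q′_2+q′_3 = D, and suppose p_i + q_i = p′_i + q′_i for i = 1,2,3. Then the closures under the shift functor of the Z-graded categories Ã_{(p̃,q̃)} and Ã_{(p̃′,q̃′)} (i.e. the Z-graded categories with objects X̃_i^k for i = 1,2,3 and all k ∈ Z, defined by the same formula as in the context) are isomorphic as Z-graded categories; in particular this closure depends, up to isomorphism, only on the triple (d_1,d_2,d_3) where d_i = (p_i+q_i)/2. -/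

import Mathlib

noncomputable section ACat

namespace ACat

/- The category `A` (for `n ≥ 3`) is modelled concretely as follows.  Objects are
`X_i`, `i ∈ ZMod n`.  The morphisms `X_i → X_j` have a basis consisting of the
nonzero alternating words in the generators `u_{·,·+1}`, `v_{·,·-1}`; a basis word
starting at the vertex `i` is encoded by an integer code `m`:
`m > 0` encodes the alternating word of length `m` whose first (rightmost) letter is
a `v`, `m < 0` encodes the word of length `-m` whose first letter is a `u`, and
`m = 0` encodes the identity.  Thus `x_i^a` has code `2a`, `y_i^a` has code `-2a`,
`v_{i,i-1} x_i^a` has code `2a+1` and `x_{i+1}^a u_{i,i+1}` has code `-(2a+1)`. -/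

variable (n : ℕ)

/-- The endpoint of the word with code `m` starting at vertex `i`. -/
def tau (i : ZMod n) (m : ℤ) : ZMod n :=
  if m % 2 = 0 then i else if 0 < m then i - 1 else i + 1

/-- Whether the last (leftmost) letter of the (nonempty) word with code `m` is a `v`. -/
def leftv (m : ℤ) : Prop := (0 < m ∧ m % 2 ≠ 0) ∨ (m < 0 ∧ m % 2 = 0)

instance (m : ℤ) : Decidable (leftv m) := by unfold leftv; infer_instance

/-- Composition of basis words at the level of codes: `cmul m₂ m₁` is the code of
`w₂ ∘ w₁` (`w₁` applied first), or `none` if the concatenated word is not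
alternating (in which case the composition is zero in `A`). -/
def cmul (m₂ m₁ : ℤ) : Option ℤ :=
  if m₁ = 0 then some m₂
  else if m₂ = 0 then some m₁
  else if (0 < m₂) ↔ ¬ leftv m₁ then
    some (if 0 < m₁ then m₁ + (m₂.natAbs : ℤ) else m₁ - (m₂.natAbs : ℤ))
  else none

variable (k : Type) [Field k]

/-- The space of morphisms `X_i → X_j` of `A`: the free `k`-module on the codes of
words from `i` to `j`. -/
abbrev AHom (i j : ZMod n) : Type := {c : ℤ // tau n i c = j} →₀ k

/-- Auxiliary: the basis morphism of an optional code. -/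
def obm (i j : ZMod n) : Option ℤ → AHom n k i j
  | none => 0
  | some r => if h : tau n i r = j then Finsupp.single ⟨r, h⟩ 1 else 0

/-- The basis-level composition. -/
def bm (i j : ZMod n) (m₂ m₁ : ℤ) : AHom n k i j := obm n k i j (cmul m₂ m₁)

/-- Composition in `A` (bilinear extension of `bm`). -/
def Acomp {i j l : ZMod n} (g : AHom n k j l) (f : AHom n k i j) : AHom n k i l :=
  f.sum fun m₁ c₁ => g.sum fun m₂ c₂ => (c₂ * c₁) • bm n k i l m₂.1 m₁.1

/-- The identity of `X_i` (the word of code `0`). -/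
def Aid (i : ZMod n) : AHom n k i i :=
  Finsupp.single ⟨0, by simp [tau]⟩ 1


variable {n k}

lemma tau_zero (i : ZMod n) : tau n i 0 = i := by simp [tau]

/-- Endpoint compatibility of the code-level composition. -/
lemma tau_cmul {m₂ m₁ r : ℤ} (i : ZMod n) (h : cmul m₂ m₁ = some r) :
    tau n i r = tau n (tau n i m₁) m₂ := by
  unfold cmul at h
  by_cases h1 : m₁ = 0
  · rw [if_pos h1] at h
    obtain rfl : m₂ = r := by injection h
    subst h1; simp [tau]
  rw [if_neg h1] at h
  by_cases h2 : m₂ = 0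
  · rw [if_pos h2] at h
    obtain rfl : m₁ = r := by injection h
    subst h2; simp [tau]
  rw [if_neg h2] at h
  by_cases h3 : (0 < m₂) ↔ ¬ leftv m₁
  · rw [if_pos h3] at h
    obtain rfl : (if 0 < m₁ then m₁ + (m₂.natAbs : ℤ) else m₁ - (m₂.natAbs : ℤ)) = r := by
      injection h
    unfold leftv at h3
    unfold tau
    split_ifs <;> (first | rfl | (exfalso; omega) | ring)
  · rw [if_neg h3] at h; exact absurd h (by simp)


lemma Acomp_zero_right {i j l : ZMod n} (g : AHom n k j l) :
    Acomp n k g (0 : AHom n k i j) = 0 := by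
  simp [Acomp]

lemma Acomp_zero_left {i j l : ZMod n} (f : AHom n k i j) :
    Acomp n k (0 : AHom n k j l) f = 0 := by
  simp [Acomp]

lemma Acomp_add_left {i j l : ZMod n} (g g' : AHom n k j l) (f : AHom n k i j) :
    Acomp n k (g + g') f = Acomp n k g f + Acomp n k g' f := by
  unfold Acomp
  rw [← Finsupp.sum_add]
  refine Finsupp.sum_congr fun m₁ _ => ?_
  rw [Finsupp.sum_add_index' (fun m₂ => by simp) (fun m₂ c c' => by rw [add_mul, add_smul])]

lemma Acomp_add_right {i j l : ZMod n} (g : AHom n k j l) (f f' : AHom n k i j) :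
    Acomp n k g (f + f') = Acomp n k g f + Acomp n k g f' := by
  unfold Acomp
  rw [Finsupp.sum_add_index' (fun m₁ => by simp) (fun m₁ c c' => ?_)]
  rw [← Finsupp.sum_add]
  refine Finsupp.sum_congr fun m₂ _ => ?_
  rw [mul_add, add_smul]

lemma Acomp_smul_left {i j l : ZMod n} (c : k) (g : AHom n k j l) (f : AHom n k i j) :
    Acomp n k (c • g) f = c • Acomp n k g f := by
  unfold Acomp
  rw [Finsupp.smul_sum]
  refine Finsupp.sum_congr fun m₁ _ => ?_
  rw [Finsupp.sum_smul_index' (fun m₂ => by simp), Finsupp.smul_sum]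
  refine Finsupp.sum_congr fun m₂ _ => ?_
  simp only [smul_eq_mul, smul_smul]
  congr 1
  ring

lemma Acomp_smul_right {i j l : ZMod n} (c : k) (g : AHom n k j l) (f : AHom n k i j) :
    Acomp n k g (c • f) = c • Acomp n k g f := by
  unfold Acomp
  rw [Finsupp.sum_smul_index' (fun m₁ => by simp), Finsupp.smul_sum]
  refine Finsupp.sum_congr fun m₁ _ => ?_
  rw [Finsupp.smul_sum]
  refine Finsupp.sum_congr fun m₂ _ => ?_
  simp only [smul_eq_mul, smul_smul]
  congr 1
  ring

lemma Acomp_single_single {i j l : ZMod n} (b₂ : {c : ℤ // tau n j c = l})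
    (b₁ : {c : ℤ // tau n i c = j}) (c₂ c₁ : k) :
    Acomp n k (Finsupp.single b₂ c₂) (Finsupp.single b₁ c₁)
      = (c₂ * c₁) • bm n k i l b₂.1 b₁.1 := by
  unfold Acomp
  rw [Finsupp.sum_single_index (by simp), Finsupp.sum_single_index (by simp)]

lemma cmul_zero_right (m : ℤ) : cmul m 0 = some m := by simp [cmul]

lemma cmul_zero_left (m : ℤ) : cmul 0 m = some m := by
  unfold cmul
  split_ifs with h1 h2 <;> simp_all

lemma Aid_comp {i j : ZMod n} (f : AHom n k i j) : Acomp n k (Aid n k j) f = f := by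
  unfold Acomp Aid
  conv_rhs => rw [← f.sum_single]
  refine Finsupp.sum_congr fun m₁ hm₁ => ?_
  rw [Finsupp.sum_single_index (by simp)]
  rw [one_mul, bm, cmul_zero_left, obm]
  rw [dif_pos m₁.2]
  simp

lemma Acomp_id {i j : ZMod n} (f : AHom n k i j) : Acomp n k f (Aid n k i) = f := by
  unfold Acomp Aid
  rw [Finsupp.sum_single_index (by simp)]
  conv_rhs => rw [← f.sum_single]
  refine Finsupp.sum_congr fun m₂ hm₂ => ?_
  rw [mul_one, bm, cmul_zero_right, obm]
  rw [dif_pos m₂.2]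
  simp


@[simp] lemma obm_none (i j : ZMod n) : obm n k i j none = 0 := rfl

lemma obm_some (i j : ZMod n) (r : ℤ) :
    obm n k i j (some r)
      = if h : tau n i r = j then Finsupp.single ⟨r, h⟩ (1 : k) else 0 := rfl

set_option maxHeartbeats 1000000 in
lemma cmul_assoc (m₃ m₂ m₁ : ℤ) :
    (cmul m₃ m₂).bind (fun r => cmul r m₁) = (cmul m₂ m₁).bind (fun r => cmul m₃ r) := by
  by_cases h1 : m₁ = 0
  · subst h1; simp [cmul_zero_right]
  by_cases h2 : m₂ = 0
  · subst h2; simp [cmul_zero_left, cmul_zero_right]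
  by_cases h3 : m₃ = 0
  · subst h3; simp [cmul_zero_left]
  unfold cmul leftv
  split_ifs <;>
    (try simp only [Option.bind_none, Option.bind_some]) <;>
    (try split_ifs) <;>
    (first | rfl | (exfalso; omega) | (congr 1; omega) | omega)

lemma bm_assoc {i j l w : ZMod n} (b₁ : {c : ℤ // tau n i c = j})
    (b₂ : {c : ℤ // tau n j c = l}) (b₃ : {c : ℤ // tau n l c = w}) :
    Acomp n k (bm n k j w b₃.1 b₂.1) (Finsupp.single b₁ 1) =
      Acomp n k (Finsupp.single b₃ 1) (bm n k i l b₂.1 b₁.1) := by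
  have hmain := cmul_assoc b₃.1 b₂.1 b₁.1
  unfold bm
  rcases ho : cmul b₃.1 b₂.1 with _ | r
  · rcases ho' : cmul b₂.1 b₁.1 with _ | r'
    · rw [obm_none, obm_none, Acomp_zero_left, Acomp_zero_right]
    · rw [obm_none, Acomp_zero_left, obm_some]
      have ht : tau n i r' = l := by rw [tau_cmul i ho', b₁.2, b₂.2]
      rw [dif_pos ht, Acomp_single_single, one_mul, one_smul]
      unfold bm
      have hnone : cmul b₃.1 r' = none := by
        rw [ho, ho'] at hmain; simpa using hmain.symm
      rw [hnone, obm_none]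
  · have ht : tau n j r = w := by rw [tau_cmul j ho, b₂.2, b₃.2]
    rw [obm_some, dif_pos ht, Acomp_single_single, one_mul, one_smul]
    rcases ho' : cmul b₂.1 b₁.1 with _ | r'
    · rw [obm_none, Acomp_zero_right]
      unfold bm
      have hnone : cmul r b₁.1 = none := by rw [ho, ho'] at hmain; simpa using hmain
      rw [hnone, obm_none]
    · have ht' : tau n i r' = l := by rw [tau_cmul i ho', b₁.2, b₂.2]
      rw [obm_some, dif_pos ht', Acomp_single_single, one_mul, one_smul]
      unfold bm
      have heq : cmul r b₁.1 = cmul b₃.1 r' := by rw [ho, ho'] at hmain; simpa using hmain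
      rw [heq]

theorem Acomp_assoc {i j l w : ZMod n} (h : AHom n k l w) (g : AHom n k j l)
    (f : AHom n k i j) :
    Acomp n k (Acomp n k h g) f = Acomp n k h (Acomp n k g f) := by
  induction f using Finsupp.induction_linear with
  | zero => rw [Acomp_zero_right, Acomp_zero_right, Acomp_zero_right]
  | add f f' hf hf' =>
      rw [Acomp_add_right, Acomp_add_right, Acomp_add_right, hf, hf']
  | single b₁ c₁ =>
    induction g using Finsupp.induction_linear with
    | zero => rw [Acomp_zero_right, Acomp_zero_left, Acomp_zero_left, Acomp_zero_right]
    | add g g' hg hg' =>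
        rw [Acomp_add_right, Acomp_add_left, Acomp_add_left, Acomp_add_right, hg, hg']
    | single b₂ c₂ =>
      induction h using Finsupp.induction_linear with
      | zero => rw [Acomp_zero_left, Acomp_zero_left, Acomp_zero_left]
      | add h h' hh hh' =>
          rw [Acomp_add_left, Acomp_add_left, Acomp_add_left, hh, hh']
      | single b₃ c₃ =>
        have e₁ : (Finsupp.single b₁ c₁ : AHom n k i j) = c₁ • Finsupp.single b₁ 1 := by
          rw [Finsupp.smul_single, smul_eq_mul, mul_one]
        have e₃ : (Finsupp.single b₃ c₃ : AHom n k l w) = c₃ • Finsupp.single b₃ 1 := by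
          rw [Finsupp.smul_single, smul_eq_mul, mul_one]
        rw [Acomp_single_single, Acomp_single_single, Acomp_smul_left, Acomp_smul_right,
          e₁, e₃, Acomp_smul_right, Acomp_smul_left, bm_assoc b₁ b₂ b₃,
          smul_smul, smul_smul]
        congr 1
        ring


/-- The degree of the basis word with code `m` starting at vertex `i`, for the grading
of `A` determined by `deg u_{i-1,i} = p i` and `deg v_{i,i-1} = q i`.  (A word with
code `m > 0` consists of the letters `v_{i,i-1}, u_{i-1,i}, v_{i,i-1}, …` (`m` of
them), a word with code `m < 0` of the letters `u_{i,i+1}, v_{i+1,i}, …`.) -/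
def deg (p q : ZMod n → ℤ) (i : ZMod n) (m : ℤ) : ℤ :=
  if 0 < m then
    (((m.natAbs + 1) / 2 : ℕ) : ℤ) * q i + ((m.natAbs / 2 : ℕ) : ℤ) * p i
  else
    (((m.natAbs + 1) / 2 : ℕ) : ℤ) * p (i + 1) + ((m.natAbs / 2 : ℕ) : ℤ) * q (i + 1)

private lemma lin1 {a b c d e f : ℤ} (Q P : ℤ) (h1 : a = c + e) (h2 : b = d + f) :
    a * Q + b * P = c * Q + d * P + (e * Q + f * P) := by subst h1; subst h2; ring

private lemma lin2 {a b c d e f : ℤ} (Q P : ℤ) (h1 : a = c + f) (h2 : b = d + e) :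
    a * Q + b * P = c * Q + d * P + (e * P + f * Q) := by subst h1; subst h2; ring

set_option maxHeartbeats 1000000 in
/-- Additivity of degrees under composition of basis words. -/
lemma deg_cmul (p q : ZMod n → ℤ) {m₂ m₁ r : ℤ} (i : ZMod n)
    (h : cmul m₂ m₁ = some r) :
    deg p q i r = deg p q i m₁ + deg p q (tau n i m₁) m₂ := by
  unfold cmul at h
  by_cases h1 : m₁ = 0
  · rw [if_pos h1] at h
    obtain rfl : m₂ = r := by injection h
    subst h1
    simp [deg, tau]
  rw [if_neg h1] at h
  by_cases h2 : m₂ = 0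
  · rw [if_pos h2] at h
    obtain rfl : m₁ = r := by injection h
    subst h2
    simp [deg, tau]
  rw [if_neg h2] at h
  by_cases h3 : (0 < m₂) ↔ ¬ leftv m₁
  · rw [if_pos h3] at h
    obtain rfl : (if 0 < m₁ then m₁ + (m₂.natAbs : ℤ) else m₁ - (m₂.natAbs : ℤ)) = r := by
      injection h
    unfold leftv at h3
    unfold deg tau
    split_ifs <;>
      (try simp only [sub_add_cancel]) <;>
      (first
        | rfl
        | (exfalso; omega)
        | exact lin1 _ _ (by omega) (by omega)
        | exact lin2 _ _ (by omega) (by omega))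
  · rw [if_neg h3] at h; exact absurd h (by simp)


/-- For any "degree" function `σ` on the index set of a free module, the submodules
spanned by the basis elements of each fixed degree form an internal direct sum
decomposition. -/
lemma isInternal_supported {α Γ : Type} [DecidableEq Γ] (σ : α → Γ) :
    DirectSum.IsInternal
      (fun γ : Γ => Finsupp.supported k k {b : α | σ b = γ}) := by
  rw [DirectSum.isInternal_submodule_iff_iSupIndep_and_iSup_eq_top]
  constructor
  · intro γ
    have hle : (⨆ (γ') (_ : γ' ≠ γ), Finsupp.supported k k {b : α | σ b = γ'})
        ≤ Finsupp.supported k k {b : α | σ b ≠ γ} := by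
      refine iSup_le fun γ' => iSup_le fun hγ' => Finsupp.supported_mono ?_
      intro b hb
      simp only [Set.mem_setOf_eq] at hb ⊢
      rw [hb]; exact hγ'
    exact (Finsupp.disjoint_supported_supported
      (by simp [Set.disjoint_left])).mono_right hle
  · rw [eq_top_iff]
    intro x _
    rw [← Finsupp.sum_single x]
    refine Submodule.finsuppSum_mem _ _ _ _ fun b hb => ?_
    exact Submodule.mem_iSup_of_mem (σ b)
      (Finsupp.single_mem_supported k _ rfl)

variable (n k) in
/-- The graded pieces of the hom spaces of the graded category `A_{(p,q)}`. -/
def grA (p q : ZMod n → ℤ) (i j : ZMod n) (δ : ℤ) : Submodule k (AHom n k i j) :=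
  Finsupp.supported k k {b : {c : ℤ // tau n i c = j} | deg p q i b.1 = δ}

lemma grA_internal (p q : ZMod n → ℤ) (i j : ZMod n) :
    DirectSum.IsInternal (grA n k p q i j) :=
  isInternal_supported (α := {c : ℤ // tau n i c = j}) (Γ := ℤ)
    (fun b => deg p q i b.1)

lemma Aid_mem_grA (p q : ZMod n → ℤ) (i : ZMod n) :
    Aid n k i ∈ grA n k p q i i 0 := by
  apply Finsupp.single_mem_supported
  show deg p q i 0 = 0
  norm_num [deg]

lemma Acomp_mem_grA (p q : ZMod n → ℤ) {i j l : ZMod n} (δ₁ δ₂ : ℤ)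
    (g : AHom n k j l) (f : AHom n k i j)
    (hg : g ∈ grA n k p q j l δ₂) (hf : f ∈ grA n k p q i j δ₁) :
    Acomp n k g f ∈ grA n k p q i l (δ₁ + δ₂) := by
  unfold Acomp
  refine Submodule.finsuppSum_mem _ _ _ _ fun m₁ hm₁ => ?_
  refine Submodule.finsuppSum_mem _ _ _ _ fun m₂ hm₂ => ?_
  refine Submodule.smul_mem _ _ ?_
  have hd₁ : deg p q i m₁.1 = δ₁ :=
    (Finsupp.mem_supported k f).mp hf (Finsupp.mem_support_iff.mpr hm₁)
  have hd₂ : deg p q j m₂.1 = δ₂ :=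
    (Finsupp.mem_supported k g).mp hg (Finsupp.mem_support_iff.mpr hm₂)
  rcases hbm : cmul m₂.1 m₁.1 with _ | r
  · rw [bm, hbm, obm_none]; exact zero_mem _
  · rw [bm, hbm, obm_some]
    split_ifs with ht
    · apply Finsupp.single_mem_supported
      show deg p q i r = δ₁ + δ₂
      rw [deg_cmul p q i hbm, m₁.2, hd₁, hd₂]
    · exact zero_mem _

variable (n k) in
/-- The generator `u_{i,i+1} : X_i → X_{i+1}` (the word consisting of one letter `u`,
with code `-1`). -/
def uElem (i : ZMod n) : AHom n k i (i + 1) :=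
  Finsupp.single ⟨-1, by norm_num [tau]⟩ 1

variable (n k) in
/-- The generator `v_{i,i-1} : X_i → X_{i-1}` (the word consisting of one letter `v`,
with code `1`). -/
def vElem (i : ZMod n) : AHom n k i (i - 1) :=
  Finsupp.single ⟨1, by norm_num [tau]⟩ 1

end ACat

end ACat

noncomputable section Stmt7

open ACat

attribute [local instance] Classical.propDecidable

structure GCat (k : Type) [Field k] where
  Obj : Type
  Hom : Obj → Obj → ModuleCat k
  gr : ∀ X Y : Obj, ℤ → Submodule k (Hom X Y)
  gr_internal : ∀ X Y : Obj, DirectSum.IsInternal (gr X Y)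
  ident : ∀ X : Obj, Hom X X
  comp : ∀ {X Y Z : Obj}, Hom Y Z → Hom X Y → Hom X Z
  comp_add_left : ∀ {X Y Z : Obj} (g g' : Hom Y Z) (f : Hom X Y),
    comp (g + g') f = comp g f + comp g' f
  comp_add_right : ∀ {X Y Z : Obj} (g : Hom Y Z) (f f' : Hom X Y),
    comp g (f + f') = comp g f + comp g f'
  comp_smul_left : ∀ {X Y Z : Obj} (c : k) (g : Hom Y Z) (f : Hom X Y),
    comp (c • g) f = c • comp g f
  comp_smul_right : ∀ {X Y Z : Obj} (c : k) (g : Hom Y Z) (f : Hom X Y),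
    comp g (c • f) = c • comp g f
  ident_mem : ∀ X : Obj, ident X ∈ gr X X 0
  comp_mem : ∀ {X Y Z : Obj} (i j : ℤ) (g : Hom Y Z) (f : Hom X Y),
    g ∈ gr Y Z j → f ∈ gr X Y i → comp g f ∈ gr X Z (i + j)
  id_comp : ∀ {X Y : Obj} (f : Hom X Y), comp (ident Y) f = f
  comp_id : ∀ {X Y : Obj} (f : Hom X Y), comp f (ident X) = f
  assoc : ∀ {W X Y Z : Obj} (h : Hom Y Z) (g : Hom X Y) (f : Hom W X),
    comp (comp h g) f = comp h (comp g f)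


/-- An isomorphism of `ℤ`-graded `k`-linear categories: a bijection on objects
together with degree-preserving `k`-linear isomorphisms on all hom spaces,
commuting with composition and preserving identities. -/
structure GIso {k : Type} [Field k] (C D : GCat k) where
  obj : C.Obj ≃ D.Obj
  hom : ∀ X Y : C.Obj, C.Hom X Y ≃ₗ[k] D.Hom (obj X) (obj Y)
  map_id : ∀ X : C.Obj, hom X X (C.ident X) = D.ident (obj X)
  map_comp : ∀ {X Y Z : C.Obj} (g : C.Hom Y Z) (f : C.Hom X Y),
    hom X Z (C.comp g f) = D.comp (hom Y Z g) (hom X Y f)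
  map_gr : ∀ (X Y : C.Obj) (δ : ℤ),
    Submodule.map (hom X Y : C.Hom X Y →ₗ[k] D.Hom (obj X) (obj Y)) (C.gr X Y δ)
      = D.gr (obj X) (obj Y) δ

variable (k : Type) [Field k]

/-- The parity (`ℤ/2`-degree) of a basis word: its length mod 2. -/
def par (m : ℤ) : ZMod 2 := ((m : ℤ) : ZMod 2)

lemma par_cmul {m₂ m₁ r : ℤ} (h : cmul m₂ m₁ = some r) :
    par r = par m₁ + par m₂ := by
  unfold par
  unfold cmul at h
  by_cases h1 : m₁ = 0
  · rw [if_pos h1] at h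
    obtain rfl : m₂ = r := by injection h
    subst h1; simp
  rw [if_neg h1] at h
  by_cases h2 : m₂ = 0
  · rw [if_pos h2] at h
    obtain rfl : m₁ = r := by injection h
    subst h2; simp
  rw [if_neg h2] at h
  by_cases h3 : (0 < m₂) ↔ ¬ leftv m₁
  · rw [if_pos h3] at h
    obtain rfl : (if 0 < m₁ then m₁ + (m₂.natAbs : ℤ) else m₁ - (m₂.natAbs : ℤ)) = r := by
      injection h
    have habs : ((m₂.natAbs : ℤ) : ZMod 2) = ((m₂ : ZMod 2)) := by
      rcases Int.natAbs_eq m₂ with h' | h'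
      · conv_rhs => rw [h']
      · conv_rhs => rw [h']
        push_cast
        rw [CharTwo.neg_eq]
    split_ifs with hs
    · rw [Int.cast_add, habs]
    · rw [Int.cast_sub, habs, CharTwo.sub_eq_add]
  · rw [if_neg h3] at h; exact absurd h (by simp)

variable (D : ℕ) (p q : ZMod 3 → ℤ)

/-- The integrality/parity condition defining the morphism spaces of the shift
closure of `Ã_{(p̃,q̃)}`: a basis word of `A` with code `c` starting at vertex `i`
gives a morphism `X̃_i^a → X̃_j^b` iff its shifted degree
`deg(c)/D + 2(b-a)/D` is an integer `z` whose parity agrees with the `ℤ/2`-degree of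
the word (here `t = b - a`). -/
def ShCond (i : ZMod 3) (c : ℤ) (t : ℤ) : Prop :=
  ∃ z : ℤ, deg p q i c + 2 * t = z * (D : ℤ) ∧ ((z : ZMod 2)) = par c

/-- The morphism spaces of the shift closure of `Ã_{(p̃,q̃)}`: objects are the
`X̃_i^a`, `i ∈ ZMod 3`, `a ∈ ℤ`. -/
abbrev THom (P Q : ZMod 3 × ℤ) : Type :=
  {c : ℤ // tau 3 P.1 c = Q.1 ∧ ShCond D p q P.1 c (Q.2 - P.2)} →₀ k

/-- Basis-level composition in the shift closure. -/
def tbm (P Q : ZMod 3 × ℤ) (m₂ m₁ : ℤ) : THom k D p q P Q :=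
  match cmul m₂ m₁ with
  | none => 0
  | some r =>
    if h : tau 3 P.1 r = Q.1 ∧ ShCond D p q P.1 r (Q.2 - P.2) then
      Finsupp.single ⟨r, h⟩ 1
    else 0

@[simp] lemma tbm_none (P Q : ZMod 3 × ℤ) {m₂ m₁ : ℤ} (h : cmul m₂ m₁ = none) :
    tbm k D p q P Q m₂ m₁ = 0 := by unfold tbm; rw [h]

lemma tbm_some (P Q : ZMod 3 × ℤ) {m₂ m₁ r : ℤ} (h : cmul m₂ m₁ = some r) :
    tbm k D p q P Q m₂ m₁ =
      if h' : tau 3 P.1 r = Q.1 ∧ ShCond D p q P.1 r (Q.2 - P.2) then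
        Finsupp.single ⟨r, h'⟩ 1
      else 0 := by unfold tbm; rw [h]

/-- Composition in the shift closure. -/
def Tcomp {P Q R : ZMod 3 × ℤ} (g : THom k D p q Q R) (f : THom k D p q P Q) :
    THom k D p q P R :=
  f.sum fun m₁ c₁ => g.sum fun m₂ c₂ => (c₂ * c₁) • tbm k D p q P R m₂.1 m₁.1

/-- The identity of `X̃_i^a`. -/
def Tid (P : ZMod 3 × ℤ) : THom k D p q P P :=
  Finsupp.single ⟨0, by
    refine ⟨by simp [tau], 0, ?_, ?_⟩
    · norm_num [deg]
    · simp [par]⟩ 1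


variable {k D p q}

lemma Tcomp_zero_right {P Q R : ZMod 3 × ℤ} (g : THom k D p q Q R) :
    Tcomp k D p q g (0 : THom k D p q P Q) = 0 := by simp [Tcomp]

lemma Tcomp_zero_left {P Q R : ZMod 3 × ℤ} (f : THom k D p q P Q) :
    Tcomp k D p q (0 : THom k D p q Q R) f = 0 := by simp [Tcomp]

lemma Tcomp_add_left {P Q R : ZMod 3 × ℤ} (g g' : THom k D p q Q R)
    (f : THom k D p q P Q) :
    Tcomp k D p q (g + g') f = Tcomp k D p q g f + Tcomp k D p q g' f := by
  unfold Tcomp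
  rw [← Finsupp.sum_add]
  refine Finsupp.sum_congr fun m₁ _ => ?_
  rw [Finsupp.sum_add_index' (fun m₂ => by simp) (fun m₂ c c' => by rw [add_mul, add_smul])]

lemma Tcomp_add_right {P Q R : ZMod 3 × ℤ} (g : THom k D p q Q R)
    (f f' : THom k D p q P Q) :
    Tcomp k D p q g (f + f') = Tcomp k D p q g f + Tcomp k D p q g f' := by
  unfold Tcomp
  rw [Finsupp.sum_add_index' (fun m₁ => by simp) (fun m₁ c c' => ?_)]
  rw [← Finsupp.sum_add]
  refine Finsupp.sum_congr fun m₂ _ => ?_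
  rw [mul_add, add_smul]

lemma Tcomp_smul_left {P Q R : ZMod 3 × ℤ} (c : k) (g : THom k D p q Q R)
    (f : THom k D p q P Q) :
    Tcomp k D p q (c • g) f = c • Tcomp k D p q g f := by
  unfold Tcomp
  rw [Finsupp.smul_sum]
  refine Finsupp.sum_congr fun m₁ _ => ?_
  rw [Finsupp.sum_smul_index' (fun m₂ => by simp), Finsupp.smul_sum]
  refine Finsupp.sum_congr fun m₂ _ => ?_
  simp only [smul_eq_mul, smul_smul]
  congr 1
  ring

lemma Tcomp_smul_right {P Q R : ZMod 3 × ℤ} (c : k) (g : THom k D p q Q R)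
    (f : THom k D p q P Q) :
    Tcomp k D p q g (c • f) = c • Tcomp k D p q g f := by
  unfold Tcomp
  rw [Finsupp.sum_smul_index' (fun m₁ => by simp), Finsupp.smul_sum]
  refine Finsupp.sum_congr fun m₁ _ => ?_
  rw [Finsupp.smul_sum]
  refine Finsupp.sum_congr fun m₂ _ => ?_
  simp only [smul_eq_mul, smul_smul]
  congr 1
  ring

lemma Tcomp_single_single {P Q R : ZMod 3 × ℤ}
    (b₂ : {c : ℤ // tau 3 Q.1 c = R.1 ∧ ShCond D p q Q.1 c (R.2 - Q.2)})
    (b₁ : {c : ℤ // tau 3 P.1 c = Q.1 ∧ ShCond D p q P.1 c (Q.2 - P.2)}) (c₂ c₁ : k) :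
    Tcomp k D p q (Finsupp.single b₂ c₂) (Finsupp.single b₁ c₁)
      = (c₂ * c₁) • tbm k D p q P R b₂.1 b₁.1 := by
  unfold Tcomp
  rw [Finsupp.sum_single_index (by simp), Finsupp.sum_single_index (by simp)]

lemma Tid_comp {P Q : ZMod 3 × ℤ} (f : THom k D p q P Q) :
    Tcomp k D p q (Tid k D p q Q) f = f := by
  unfold Tcomp Tid
  conv_rhs => rw [← f.sum_single]
  refine Finsupp.sum_congr fun m₁ hm₁ => ?_
  rw [Finsupp.sum_single_index (by simp)]
  rw [one_mul, tbm_some k D p q P Q (cmul_zero_left m₁.1)]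
  rw [dif_pos m₁.2]
  simp

lemma Tcomp_id {P Q : ZMod 3 × ℤ} (f : THom k D p q P Q) :
    Tcomp k D p q f (Tid k D p q P) = f := by
  unfold Tcomp Tid
  rw [Finsupp.sum_single_index (by simp)]
  conv_rhs => rw [← f.sum_single]
  refine Finsupp.sum_congr fun m₂ hm₂ => ?_
  rw [mul_one, tbm_some k D p q P Q (cmul_zero_right m₂.1)]
  rw [dif_pos m₂.2]
  simp

/-- Additivity of the integrality condition under composition of words. -/
lemma shcond_cmul {m₂ m₁ r : ℤ} {i j : ZMod 3} (a b c : ℤ)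
    (hbm : cmul m₂ m₁ = some r) (hj : tau 3 i m₁ = j)
    (h₁ : ShCond D p q i m₁ (b - a)) (h₂ : ShCond D p q j m₂ (c - b)) :
    ShCond D p q i r (c - a) := by
  obtain ⟨z₁, hz₁, hp₁⟩ := h₁
  obtain ⟨z₂, hz₂, hp₂⟩ := h₂
  refine ⟨z₁ + z₂, ?_, ?_⟩
  · rw [deg_cmul p q i hbm, hj]
    linear_combination hz₁ + hz₂
  · rw [par_cmul hbm, ← hp₁, ← hp₂]
    push_cast
    ring

lemma tbm_assoc {P Q R S : ZMod 3 × ℤ}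
    (b₁ : {c : ℤ // tau 3 P.1 c = Q.1 ∧ ShCond D p q P.1 c (Q.2 - P.2)})
    (b₂ : {c : ℤ // tau 3 Q.1 c = R.1 ∧ ShCond D p q Q.1 c (R.2 - Q.2)})
    (b₃ : {c : ℤ // tau 3 R.1 c = S.1 ∧ ShCond D p q R.1 c (S.2 - R.2)}) :
    Tcomp k D p q (tbm k D p q Q S b₃.1 b₂.1) (Finsupp.single b₁ 1) =
      Tcomp k D p q (Finsupp.single b₃ 1) (tbm k D p q P R b₂.1 b₁.1) := by
  have hmain := cmul_assoc b₃.1 b₂.1 b₁.1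
  rcases ho : cmul b₃.1 b₂.1 with _ | r
  · rcases ho' : cmul b₂.1 b₁.1 with _ | r'
    · rw [tbm_none k D p q Q S ho, tbm_none k D p q P R ho',
        Tcomp_zero_left, Tcomp_zero_right]
    · rw [tbm_none k D p q Q S ho, Tcomp_zero_left, tbm_some k D p q P R ho']
      have ht : tau 3 P.1 r' = R.1 ∧ ShCond D p q P.1 r' (R.2 - P.2) := by
        refine ⟨by rw [tau_cmul P.1 ho', b₁.2.1, b₂.2.1], ?_⟩
        exact shcond_cmul P.2 Q.2 R.2 ho' b₁.2.1 b₁.2.2 b₂.2.2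
      rw [dif_pos ht, Tcomp_single_single, one_mul, one_smul]
      have hnone : cmul b₃.1 r' = none := by
        rw [ho, ho'] at hmain; simpa using hmain.symm
      rw [tbm_none k D p q P S hnone]
  · have ht : tau 3 Q.1 r = S.1 ∧ ShCond D p q Q.1 r (S.2 - Q.2) := by
      refine ⟨by rw [tau_cmul Q.1 ho, b₂.2.1, b₃.2.1], ?_⟩
      exact shcond_cmul Q.2 R.2 S.2 ho b₂.2.1 b₂.2.2 b₃.2.2
    rw [tbm_some k D p q Q S ho, dif_pos ht, Tcomp_single_single, one_mul, one_smul]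
    rcases ho' : cmul b₂.1 b₁.1 with _ | r'
    · rw [tbm_none k D p q P R ho', Tcomp_zero_right]
      have hnone : cmul r b₁.1 = none := by rw [ho, ho'] at hmain; simpa using hmain
      rw [tbm_none k D p q P S hnone]
    · have ht' : tau 3 P.1 r' = R.1 ∧ ShCond D p q P.1 r' (R.2 - P.2) := by
        refine ⟨by rw [tau_cmul P.1 ho', b₁.2.1, b₂.2.1], ?_⟩
        exact shcond_cmul P.2 Q.2 R.2 ho' b₁.2.1 b₁.2.2 b₂.2.2
      rw [tbm_some k D p q P R ho', dif_pos ht', Tcomp_single_single, one_mul, one_smul]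
      have heq : cmul r b₁.1 = cmul b₃.1 r' := by rw [ho, ho'] at hmain; simpa using hmain
      unfold tbm
      rw [heq]

theorem Tcomp_assoc {P Q R S : ZMod 3 × ℤ} (h : THom k D p q R S)
    (g : THom k D p q Q R) (f : THom k D p q P Q) :
    Tcomp k D p q (Tcomp k D p q h g) f = Tcomp k D p q h (Tcomp k D p q g f) := by
  induction f using Finsupp.induction_linear with
  | zero => rw [Tcomp_zero_right, Tcomp_zero_right, Tcomp_zero_right]
  | add f f' hf hf' =>
      rw [Tcomp_add_right, Tcomp_add_right, Tcomp_add_right, hf, hf']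
  | single b₁ c₁ =>
    induction g using Finsupp.induction_linear with
    | zero => rw [Tcomp_zero_right, Tcomp_zero_left, Tcomp_zero_left, Tcomp_zero_right]
    | add g g' hg hg' =>
        rw [Tcomp_add_right, Tcomp_add_left, Tcomp_add_left, Tcomp_add_right, hg, hg']
    | single b₂ c₂ =>
      induction h using Finsupp.induction_linear with
      | zero => rw [Tcomp_zero_left, Tcomp_zero_left, Tcomp_zero_left]
      | add h h' hh hh' =>
          rw [Tcomp_add_left, Tcomp_add_left, Tcomp_add_left, hh, hh']
      | single b₃ c₃ =>
        have e₁ : (Finsupp.single b₁ c₁ : THom k D p q P Q)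
            = c₁ • Finsupp.single b₁ 1 := by
          rw [Finsupp.smul_single, smul_eq_mul, mul_one]
        have e₃ : (Finsupp.single b₃ c₃ : THom k D p q R S)
            = c₃ • Finsupp.single b₃ 1 := by
          rw [Finsupp.smul_single, smul_eq_mul, mul_one]
        rw [Tcomp_single_single, Tcomp_single_single, Tcomp_smul_left, Tcomp_smul_right,
          e₁, e₃, Tcomp_smul_right, Tcomp_smul_left, tbm_assoc b₁ b₂ b₃,
          smul_smul, smul_smul]
        congr 1
        ring

variable (k D p q)

/-- The closure under the shift functor of the `ℤ`-graded category `Ã_{(p̃,q̃)}`: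
objects are the `X̃_i^a` for `i ∈ ZMod 3`, `a ∈ ℤ`; the morphisms
`X̃_i^a → X̃_j^b` are spanned by the basis words of `A(X_i, X_j)` whose shifted
degree `deg/D + 2(b-a)/D` is an integer whose parity agrees with the parity of the
word; the `ℤ`-grading is by this integer. -/
def TCat : GCat k where
  Obj := ZMod 3 × ℤ
  Hom P Q := ModuleCat.of k (THom k D p q P Q)
  gr P Q z := Finsupp.supported k k
    {b : {c : ℤ // tau 3 P.1 c = Q.1 ∧ ShCond D p q P.1 c (Q.2 - P.2)} |
      (deg p q P.1 b.1 + 2 * (Q.2 - P.2)) / (D : ℤ) = z}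
  gr_internal P Q :=
    isInternal_supported
      (α := {c : ℤ // tau 3 P.1 c = Q.1 ∧ ShCond D p q P.1 c (Q.2 - P.2)}) (Γ := ℤ)
      (fun b => (deg p q P.1 b.1 + 2 * (Q.2 - P.2)) / (D : ℤ))
  ident P := Tid k D p q P
  comp g f := Tcomp k D p q g f
  comp_add_left g g' f := Tcomp_add_left g g' f
  comp_add_right g f f' := Tcomp_add_right g f f'
  comp_smul_left c g f := Tcomp_smul_left c g f
  comp_smul_right c g f := Tcomp_smul_right c g f
  ident_mem P := by
    apply Finsupp.single_mem_supported
    show (deg p q P.1 0 + 2 * (P.2 - P.2)) / (D : ℤ) = 0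
    have h0 : deg p q P.1 0 = 0 := by norm_num [deg]
    rw [h0]
    norm_num
  comp_mem {P Q R} δ₁ δ₂ g f hg hf := by
    unfold Tcomp
    refine Submodule.finsuppSum_mem _ _ _ _ fun m₁ hm₁ => ?_
    refine Submodule.finsuppSum_mem _ _ _ _ fun m₂ hm₂ => ?_
    refine Submodule.smul_mem _ _ ?_
    have hd₁ : (deg p q P.1 m₁.1 + 2 * (Q.2 - P.2)) / (D : ℤ) = δ₁ :=
      (Finsupp.mem_supported k f).mp hf (Finsupp.mem_support_iff.mpr hm₁)
    have hd₂ : (deg p q Q.1 m₂.1 + 2 * (R.2 - Q.2)) / (D : ℤ) = δ₂ :=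
      (Finsupp.mem_supported k g).mp hg (Finsupp.mem_support_iff.mpr hm₂)
    rcases hbm : cmul m₂.1 m₁.1 with _ | r
    · rw [tbm_none k D p q P R hbm]; exact zero_mem _
    · rw [tbm_some k D p q P R hbm]
      split_ifs with ht
      · apply Finsupp.single_mem_supported
        show (deg p q P.1 r + 2 * (R.2 - P.2)) / (D : ℤ) = δ₁ + δ₂
        obtain ⟨z₁, hz₁, -⟩ := m₁.2.2
        obtain ⟨z₂, hz₂, -⟩ := m₂.2.2
        have hnum : deg p q P.1 r + 2 * (R.2 - P.2) = (z₁ + z₂) * (D : ℤ) := by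
          rw [deg_cmul p q P.1 hbm, m₁.2.1]
          linear_combination hz₁ + hz₂
        by_cases hD0 : (D : ℤ) = 0
        · have e₁ : δ₁ = 0 := by rw [← hd₁, hD0]; simp
          have e₂ : δ₂ = 0 := by rw [← hd₂, hD0]; simp
          rw [e₁, e₂, hD0]
          simp
        · have e₁ : z₁ = δ₁ := by rw [← hd₁, hz₁, Int.mul_ediv_cancel _ hD0]
          have e₂ : z₂ = δ₂ := by rw [← hd₂, hz₂, Int.mul_ediv_cancel _ hD0]
          rw [hnum, Int.mul_ediv_cancel _ hD0, e₁, e₂]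
      · exact zero_mem _
  id_comp f := Tid_comp f
  comp_id f := Tcomp_id f
  assoc h g f := Tcomp_assoc h g f

/-!
Replacing `(p, q)` by `(p', q')` with `pᵢ + qᵢ = p'ᵢ + q'ᵢ` only moves degree between the
letters `u` and `v` of a word; since the words alternate, a word from `X_i` to `X_j` changes
degree by `2 (sᵢ - sⱼ)` for any `s` with `q'ᵢ - qᵢ = 2 (sᵢ - sᵢ₋₁)`. Such an `s` exists
because `q' - q` is even and sums to `0`. Relabelling `X̃_i^a` as `X̃_i^{a + sᵢ}` then matches
the shifted degrees, hence the morphism spaces, their gradings and composition, word for word.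
-/

lemma Finsupp.map_domLCongr_supported {R M α β : Type*} [Semiring R] [AddCommMonoid M]
    [Module R M] (e : α ≃ β) (S : Set α) :
    (supported M R S).map (Finsupp.domLCongr e : (α →₀ M) ≃ₗ[R] (β →₀ M)).toLinearMap
      = supported M R (e '' S) := by
  have : (Finsupp.domLCongr e : (α →₀ M) ≃ₗ[R] (β →₀ M)).toLinearMap = lmapDomain M R e :=
    LinearMap.ext fun l => equivMapDomain_eq_mapDomain e l
  rw [this, lmapDomain_supported]

lemma ZMod.exists_eq_sub_pred {G : Type*} [AddCommGroup G] (g : ZMod 3 → G)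
    (hg : g 0 + g 1 + g 2 = 0) : ∃ s : ZMod 3 → G, ∀ i, g i = s i - s (i - 1) := by
  refine ⟨![0, g 1, g 1 + g 2], fun i => ?_⟩
  fin_cases i
  · change g 0 = 0 - (g 1 + g 2)
    rw [zero_sub, eq_neg_iff_add_eq_zero, ← add_assoc, hg]
  · change g 1 = g 1 - 0
    rw [sub_zero]
  · change g 2 = g 1 + g 2 - g 1
    abel

section Shift

variable {k D p q} {p' q' s : ZMod 3 → ℤ}

variable (p q p' q' s) in
def IsDegShift : Prop :=
  ∀ i c, deg p' q' i c + 2 * (s (tau 3 i c) - s i) = deg p q i c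

lemma isDegShift_of_add_eq (hpq : ∀ i, p i + q i = p' i + q' i)
    (hstep : ∀ i, q' i - q i = 2 * (s i - s (i - 1))) : IsDegShift p q p' q' s := by
  intro i c
  have hstep' : q' (i + 1) - q (i + 1) = 2 * (s (i + 1) - s i) := by
    simpa using hstep (i + 1)
  have h_even : c % 2 = 0 → (c.natAbs + 1) / 2 = c.natAbs / 2 := by omega
  have h_odd : ¬c % 2 = 0 → (c.natAbs + 1) / 2 = c.natAbs / 2 + 1 := by omega
  unfold deg tau
  split_ifs with hpos hc hc
  · rw [h_even hc]
    linear_combination (-((c.natAbs / 2 : ℕ) : ℤ)) * hpq i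
  · rw [h_odd hc, Nat.cast_succ]
    linear_combination (-((c.natAbs / 2 : ℕ) : ℤ)) * hpq i + hstep i
  · rw [h_even hc]
    linear_combination (-((c.natAbs / 2 : ℕ) : ℤ)) * hpq (i + 1)
  · rw [h_odd hc, Nat.cast_succ]
    linear_combination (-((c.natAbs / 2 : ℕ) : ℤ) - 1) * hpq (i + 1) - hstep'

def shiftEquiv (s : ZMod 3 → ℤ) : ZMod 3 × ℤ ≃ ZMod 3 × ℤ :=
  Equiv.prodShear (Equiv.refl _) fun i => Equiv.addRight (s i)

lemma IsDegShift.deg_add_shift (hs : IsDegShift p q p' q' s) {P Q : ZMod 3 × ℤ} {c : ℤ}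
    (hc : tau 3 P.1 c = Q.1) :
    deg p' q' P.1 c + 2 * ((shiftEquiv s Q).2 - (shiftEquiv s P).2)
      = deg p q P.1 c + 2 * (Q.2 - P.2) := by
  have := hs P.1 c
  rw [hc] at this
  simp only [shiftEquiv, Equiv.prodShear_apply, Equiv.coe_addRight]
  linarith

lemma IsDegShift.shCond_iff (hs : IsDegShift p q p' q' s) {P Q : ZMod 3 × ℤ} {c : ℤ}
    (hc : tau 3 P.1 c = Q.1) :
    ShCond D p' q' P.1 c ((shiftEquiv s Q).2 - (shiftEquiv s P).2)
      ↔ ShCond D p q P.1 c (Q.2 - P.2) := by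
  simp only [ShCond, hs.deg_add_shift hc]

variable (D) in
def basisShift (hs : IsDegShift p q p' q' s) (P Q : ZMod 3 × ℤ) :
    {c : ℤ // tau 3 P.1 c = Q.1 ∧ ShCond D p q P.1 c (Q.2 - P.2)} ≃
      {c : ℤ // tau 3 (shiftEquiv s P).1 c = (shiftEquiv s Q).1 ∧
        ShCond D p' q' (shiftEquiv s P).1 c ((shiftEquiv s Q).2 - (shiftEquiv s P).2)} :=
  Equiv.subtypeEquivRight fun _ => and_congr_right fun hc => (hs.shCond_iff hc).symm

variable (k D) in
def homShift (hs : IsDegShift p q p' q' s) (P Q : ZMod 3 × ℤ) :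
    THom k D p q P Q ≃ₗ[k] THom k D p' q' (shiftEquiv s P) (shiftEquiv s Q) :=
  Finsupp.domLCongr (basisShift D hs P Q)

lemma homShift_single (hs : IsDegShift p q p' q' s) {P Q : ZMod 3 × ℤ}
    (b : {c : ℤ // tau 3 P.1 c = Q.1 ∧ ShCond D p q P.1 c (Q.2 - P.2)}) (a : k) :
    homShift k D hs P Q (Finsupp.single b a)
      = Finsupp.single ⟨b.1, (basisShift D hs P Q b).2⟩ a :=
  Finsupp.domLCongr_single _ _ _

lemma homShift_tbm (hs : IsDegShift p q p' q' s) (P R : ZMod 3 × ℤ) (m₂ m₁ : ℤ) :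
    homShift k D hs P R (tbm k D p q P R m₂ m₁)
      = tbm k D p' q' (shiftEquiv s P) (shiftEquiv s R) m₂ m₁ := by
  rcases ho : cmul m₂ m₁ with _ | r
  · rw [tbm_none k D p q P R ho, tbm_none k D p' q' _ _ ho, map_zero]
  · rw [tbm_some k D p q P R ho, tbm_some k D p' q' _ _ ho]
    by_cases h : tau 3 P.1 r = R.1 ∧ ShCond D p q P.1 r (R.2 - P.2)
    · rw [dif_pos h, homShift_single, dif_pos]
      exact (basisShift D hs P R ⟨r, h⟩).2
    · rw [dif_neg h, dif_neg (fun h' => h ((basisShift D hs P R).symm ⟨r, h'⟩).2), map_zero]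

lemma homShift_Tid (hs : IsDegShift p q p' q' s) (P : ZMod 3 × ℤ) :
    homShift k D hs P P (Tid k D p q P) = Tid k D p' q' (shiftEquiv s P) :=
  homShift_single hs _ _

lemma homShift_Tcomp (hs : IsDegShift p q p' q' s) {P Q R : ZMod 3 × ℤ}
    (g : THom k D p q Q R) (f : THom k D p q P Q) :
    homShift k D hs P R (Tcomp k D p q g f)
      = Tcomp k D p' q' (homShift k D hs Q R g) (homShift k D hs P Q f) := by
  induction f using Finsupp.induction_linear with
  | zero => simp only [Tcomp_zero_right, map_zero]
  | add f f' hf hf' => simp only [Tcomp_add_right, map_add, hf, hf']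
  | single b₁ c₁ =>
    induction g using Finsupp.induction_linear with
    | zero => simp only [Tcomp_zero_left, map_zero]
    | add g g' hg hg' => simp only [Tcomp_add_left, map_add, hg, hg']
    | single b₂ c₂ =>
      rw [Tcomp_single_single, map_smul, homShift_single, homShift_single, Tcomp_single_single,
        homShift_tbm]

lemma homShift_map_gr (hs : IsDegShift p q p' q' s) (P Q : ZMod 3 × ℤ) (δ : ℤ) :
    ((TCat k D p q).gr P Q δ).map (homShift k D hs P Q).toLinearMap
      = (TCat k D p' q').gr (shiftEquiv s P) (shiftEquiv s Q) δ := by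
  refine (Finsupp.map_domLCongr_supported _ _).trans (congrArg _ ?_)
  rw [Equiv.image_eq_preimage_symm]
  ext b
  simp only [Set.mem_preimage, Set.mem_ofPred_eq]
  exact iff_of_eq (congrArg (· / (D : ℤ) = δ) (hs.deg_add_shift (P := P) (Q := Q) b.2.1).symm)

variable (k D) in
def TCat.isoOfDegShift (hs : IsDegShift p q p' q' s) : GIso (TCat k D p q) (TCat k D p' q') where
  obj := shiftEquiv s
  hom := homShift k D hs
  map_id := homShift_Tid hs
  map_comp := homShift_Tcomp hs
  map_gr := homShift_map_gr hs

end Shift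

theorem stmt_7_general (k : Type) [Field k] (D : ℕ)
    (p q p' q' : ZMod 3 → ℤ)
    (hq2 : ∀ i, (2 : ℤ) ∣ (q i - (D : ℤ)))
    (hq2' : ∀ i, (2 : ℤ) ∣ (q' i - (D : ℤ)))
    (hqs : ∑ i ∈ Finset.range 3, q (i : ZMod 3) = (D : ℤ))
    (hqs' : ∑ i ∈ Finset.range 3, q' (i : ZMod 3) = (D : ℤ))
    (hpq : ∀ i, p i + q i = p' i + q' i) :
    Nonempty (GIso (TCat k D p q) (TCat k D p' q')) := by
  have hhalf : ∀ i, q' i - q i = 2 * ((q' i - q i) / 2) := fun i =>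
    (Int.mul_ediv_cancel' (by simpa using (hq2' i).sub (hq2 i))).symm
  simp only [Finset.sum_range_succ, Finset.sum_range_zero, zero_add, Nat.cast_zero,
    Nat.cast_one, Nat.cast_ofNat] at hqs hqs'
  obtain ⟨s, hs⟩ := ZMod.exists_eq_sub_pred (fun i => (q' i - q i) / 2) (by
    linarith [hhalf 0, hhalf 1, hhalf 2])
  exact ⟨TCat.isoOfDegShift k D (isDegShift_of_add_eq hpq fun i => by rw [hhalf, hs])⟩

/-- The closure of `Ã_{(p̃,q̃)}` under the shift functor depends, up to isomorphism
of `ℤ`-graded categories, only on the data `dᵢ = (pᵢ + qᵢ)/2`: if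
`pᵢ + qᵢ = p'ᵢ + q'ᵢ` (all congruent to `D` mod 2, with
`p₁+p₂+p₃ = q₁+q₂+q₃ = p'₁+p'₂+p'₃ = q'₁+q'₂+q'₃ = D`), then the corresponding
`ℤ`-graded categories are isomorphic. -/
theorem stmt_7 (k : Type) [Field k] (D : ℕ) (hD : 1 ≤ D)
    (p q p' q' : ZMod 3 → ℤ)
    (hp2 : ∀ i, (2 : ℤ) ∣ (p i - (D : ℤ))) (hq2 : ∀ i, (2 : ℤ) ∣ (q i - (D : ℤ)))
    (hp2' : ∀ i, (2 : ℤ) ∣ (p' i - (D : ℤ))) (hq2' : ∀ i, (2 : ℤ) ∣ (q' i - (D : ℤ)))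
    (hps : ∑ i ∈ Finset.range 3, p (i : ZMod 3) = (D : ℤ))
    (hqs : ∑ i ∈ Finset.range 3, q (i : ZMod 3) = (D : ℤ))
    (hps' : ∑ i ∈ Finset.range 3, p' (i : ZMod 3) = (D : ℤ))
    (hqs' : ∑ i ∈ Finset.range 3, q' (i : ZMod 3) = (D : ℤ))
    (hpq : ∀ i, p i + q i = p' i + q' i) :
    Nonempty (GIso (TCat k D p q) (TCat k D p' q')) :=
  stmt_7_general k D p q p' q' hq2 hq2' hqs hqs' hpq

end Stmt7
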